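/- arXiv:2206.06526 — 3 statements merged into one kernel-verified Lean document; each statement's English description precedes it below -/
import Mathlib

section
/- Under the same setting, the feasibility lower bound α_lb(P) = max_{q ∈ [0,1]} min{ I(q)/D_KL(P ‖ N(0,1)), 1/(2(c_2² + q(χ²(P, N(0,1)) − c_2²))) } satisfies α_lb(P) ≥ (1/4) · min{ 1/c_2², 1/( D_KL(P ‖ N(0,1))^{1/3} (χ²(P, N(0,1)) − c_2²)^{2/3} ) }. -/
open MeasureTheory ProbabilityTheory Filter Topology BoundedContinuousFunction
open scoped ENNReal NNReal

/-- The standard Gaussian measure `N(0, I)` on `ι → ℝ`. -/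
noncomputable def stdGaussian (ι : Type*) [Fintype ι] : Measure (ι → ℝ) :=
  Measure.pi fun _ => gaussianReal 0 1

/-- The law of `n` i.i.d. `N(0, I_d)` rows: the data matrix `X ∈ ℝ^{n×d}`. -/
noncomputable def dataMeasure (n d : ℕ) : Measure (Fin n → Fin d → ℝ) :=
  Measure.pi fun _ : Fin n => stdGaussian (Fin d)

/-- `Wᵀ x ∈ ℝ^m`, the projection of a data point `x ∈ ℝ^d` by `W ∈ ℝ^{d×m}`. -/
def projW {d m : ℕ} (W : Fin d → Fin m → ℝ) (x : Fin d → ℝ) : Fin m → ℝ :=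
  fun j => ∑ l, W l j * x l

/-- `WᵀW = I_m`: the columns of `W` are orthonormal. -/
def IsOrtho {d m : ℕ} (W : Fin d → Fin m → ℝ) : Prop :=
  ∀ j k : Fin m, (∑ l, W l j * W l k) = if j = k then (1 : ℝ) else 0

/-- Uniform measure on `[0,1]`, used as a source of auxiliary randomness `ω`. -/
noncomputable def unif01 : Measure ℝ := volume.restrict (Set.Icc 0 1)

/-- `P` is `(α, m)`-feasible: along any sequence of dimensions `d = d(n)` with `n/d → α`,
there is a sequence of random orthogonal matrices `W_n(X, ω) ∈ ℝ^{d×m}` such that the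
empirical distribution of the projected points `Wᵀx_i` converges weakly to `P`
in probability. -/
def Feasible (m : ℕ) (α : ℝ) (P : Measure (Fin m → ℝ)) : Prop :=
  ∀ d : ℕ → ℕ, Tendsto (fun n : ℕ => (n : ℝ) / (d n : ℝ)) atTop (nhds α) →
    ∃ W : ∀ n : ℕ, (Fin n → Fin (d n) → ℝ) → ℝ → (Fin (d n) → Fin m → ℝ),
      (∀ n, Measurable (Function.uncurry (W n))) ∧
      (∀ n X ω, IsOrtho (W n X ω)) ∧
      (∀ f : BoundedContinuousFunction (Fin m → ℝ) ℝ, ∀ ε : ℝ, 0 < ε →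
        Tendsto (fun n : ℕ =>
          ((dataMeasure n (d n)).prod unif01)
            {p | ε ≤ |(∑ i, f (projW (W n p.1 p.2) (p.1 i))) / (n : ℝ) - ∫ z, f z ∂P|})
          atTop (nhds 0))

/-- The set of couplings of two measures. -/
def couplings {α β : Type*} [MeasurableSpace α] [MeasurableSpace β]
    (P : Measure α) (Q : Measure β) : Set (Measure (α × β)) :=
  {γ | γ.map Prod.fst = P ∧ γ.map Prod.snd = Q}

/-- The second Wasserstein distance (with Euclidean cost) between measures on `ℝ^m`. -/
noncomputable def W2 {m : ℕ} (P Q : Measure (Fin m → ℝ)) : ℝ≥0∞ :=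
  ⨅ γ ∈ couplings P Q,
    (∫⁻ z : (Fin m → ℝ) × (Fin m → ℝ),
        ENNReal.ofReal (∑ i, (z.1 i - z.2 i) ^ 2) ∂γ) ^ (1 / 2 : ℝ)

/-- The Gaussian `N(0, s² I_m)` on `ℝ^m`. -/
noncomputable def scaledGaussian (m : ℕ) (s : ℝ) : Measure (Fin m → ℝ) :=
  (stdGaussian (Fin m)).map fun x => fun i => s * x i

/-- The standard normal density `φ`. -/
noncomputable def stdPDF (x : ℝ) : ℝ := ProbabilityTheory.gaussianPDFReal 0 1 x

/-- The chi-square distance `χ²(P, N(0,1)) = ∫ (p − φ)²/φ` for `P` of density `p`. -/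
noncomputable def chiSq1 (p : ℝ → ℝ) : ℝ := ∫ x, (p x - stdPDF x) ^ 2 / stdPDF x

/-- `c₂ = (1/√2) ∫ (x² − 1)(p(x) − φ(x)) dx`, the degree-2 Hermite coefficient. -/
noncomputable def cTwo (p : ℝ → ℝ) : ℝ :=
  (1 / Real.sqrt 2) * ∫ x, (x ^ 2 - 1) * (p x - stdPDF x)

/-- `D_KL(P ‖ N(0,1)) = ∫ p log(p/φ)` for `P` of density `p`. -/
noncomputable def dklGauss1 (p : ℝ → ℝ) : ℝ := ∫ x, p x * Real.log (p x / stdPDF x)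

/-- `I(q) = −(1/2) log(1 − q²)`. -/
noncomputable def Iq (q : ℝ) : ℝ := -(1 / 2) * Real.log (1 - q ^ 2)

/-- The feasibility lower bound
`α_lb(P) = max_{q ∈ [0,1]} min { I(q)/D_KL(P‖N(0,1)), 1/(2(c₂² + q(χ² − c₂²))) }`. -/
noncomputable def alphaLB1 (p : ℝ → ℝ) : ℝ :=
  sSup ((fun q : ℝ => min (Iq q / dklGauss1 p)
      (1 / (2 * (cTwo p ^ 2 + q * (chiSq1 p - cTwo p ^ 2))))) '' Set.Icc (0 : ℝ) 1)
/-! Write `c = c₂²`, `D = D_KL(P ‖ N(0,1))`, `V = χ² − c₂²` and `T = D^{1/3} V^{2/3}`, so that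
`T³ = D V²`, and let `R = ¼ min(1/c, 1/T)`. The point `q = √(1 − e^{−2DR})` makes the
information term exactly `I(q)/D = R`, while `q² ≤ 2DR ≤ D/(2T)` gives `(qV)² ≤ D V²/(2T) ≤ T²`,
so `2(c + qV) ≤ 2(c + T) ≤ 1/R`. Gibbs' inequality `D ≥ 0` is what excludes the sign cases in
which `T > 0` without `D > 0` and `V ≥ 0`. -/

open Real Set

lemma sub_le_mul_log_div {a b : ℝ} (ha : 0 ≤ a) (hb : 0 < b) : a - b ≤ a * log (a / b) := by
  rcases ha.eq_or_lt with rfl | ha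
  · simp [hb.le]
  · have := one_sub_inv_le_log_of_pos (div_pos ha hb)
    rw [inv_div] at this
    calc a - b = a * (1 - b / a) := by field_simp
      _ ≤ a * log (a / b) := by gcongr

lemma integral_sub_le_integral_mul_log_div {α : Type*} [MeasurableSpace α] {μ : Measure α}
    {f g : α → ℝ} (hf0 : ∀ x, 0 ≤ f x) (hg0 : ∀ x, 0 < g x) (hf : Integrable f μ)
    (hg : Integrable g μ) (hfg : Integrable (fun x => f x * log (f x / g x)) μ) :
    ∫ x, f x ∂μ - ∫ x, g x ∂μ ≤ ∫ x, f x * log (f x / g x) ∂μ := by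
  rw [← integral_sub hf hg]
  exact integral_mono (hf.sub hg) hfg fun x => sub_le_mul_log_div (hf0 x) (hg0 x)

lemma integrable_and_integral_eq_one_of_isProbabilityMeasure_withDensity {α : Type*}
    [MeasurableSpace α] {μ : Measure α} {f : α → ℝ} (hf : Measurable f) (hf0 : ∀ x, 0 ≤ f x)
    (h : IsProbabilityMeasure (μ.withDensity fun x => ENNReal.ofReal (f x))) :
    Integrable f μ ∧ ∫ x, f x ∂μ = 1 := by
  have h1 := h.measure_univ
  rw [withDensity_apply _ MeasurableSet.univ, setLIntegral_univ] at h1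
  refine ⟨⟨hf.aestronglyMeasurable, ?_⟩, ?_⟩
  · rw [hasFiniteIntegral_iff_ofReal (.of_forall hf0), h1]
    exact ENNReal.one_lt_top
  · rw [integral_eq_lintegral_of_nonneg_ae (.of_forall hf0) hf.aestronglyMeasurable, h1]
    simp

lemma stdPDF_pos (x : ℝ) : 0 < stdPDF x := gaussianPDFReal_pos 0 1 x one_ne_zero

lemma integrable_stdPDF : Integrable stdPDF := integrable_gaussianPDFReal 0 1

lemma integral_stdPDF : ∫ x, stdPDF x = 1 := integral_gaussianPDFReal_eq_one 0 one_ne_zero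

lemma dklGauss1_nonneg {p : ℝ → ℝ} (hp : Measurable p) (hp0 : ∀ x, 0 ≤ p x)
    (hprob : IsProbabilityMeasure (volume.withDensity fun x => ENNReal.ofReal (p x))) :
    0 ≤ dklGauss1 p := by
  obtain ⟨hpi, hp1⟩ :=
    integrable_and_integral_eq_one_of_isProbabilityMeasure_withDensity hp hp0 hprob
  by_cases hint : Integrable fun x => p x * log (p x / stdPDF x)
  · simpa [dklGauss1, hp1, integral_stdPDF] using
      integral_sub_le_integral_mul_log_div hp0 stdPDF_pos hpi integrable_stdPDF hint
  · rw [dklGauss1, integral_undef hint]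

lemma Iq_sqrt_one_sub_exp {t : ℝ} (ht : 0 ≤ t) : Iq (√(1 - exp (-(2 * t)))) = t := by
  have : 0 ≤ 1 - exp (-(2 * t)) := by
    rw [sub_nonneg]; exact exp_le_one_iff.mpr (by linarith)
  rw [Iq, sq_sqrt this, sub_sub_cancel, log_exp]
  ring

-- `Real.rpow` at a negative base is `exp (log x * y) * cos (y * π)`, and `cos (2π/3) < 0`.
lemma rpow_two_div_three_neg {x : ℝ} (hx : x < 0) : x ^ (2 / 3 : ℝ) < 0 := by
  rw [rpow_def_of_neg hx, show (2 / 3 : ℝ) * π = π - π / 3 by ring, cos_pi_sub,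
    cos_pi_div_three]
  nlinarith [exp_pos (log x * (2 / 3))]

lemma pos_and_nonneg_of_rpow_mul_rpow_pos {D V : ℝ} (hD : 0 ≤ D)
    (h : 0 < D ^ (1 / 3 : ℝ) * V ^ (2 / 3 : ℝ)) : 0 < D ∧ 0 ≤ V := by
  refine ⟨hD.lt_of_ne ?_, not_lt.mp fun hV => ?_⟩
  · rintro rfl
    simp at h
  · nlinarith [rpow_two_div_three_neg hV, rpow_nonneg hD (1 / 3 : ℝ)]

lemma rpow_mul_rpow_pow_three {D V : ℝ} (hD : 0 ≤ D) (hV : 0 ≤ V) :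
    (D ^ (1 / 3 : ℝ) * V ^ (2 / 3 : ℝ)) ^ 3 = D * V ^ 2 := by
  rw [mul_pow, ← rpow_mul_natCast hD, ← rpow_mul_natCast hV]
  norm_num

lemma exists_mem_Icc_quarter_min_le {c D V T : ℝ} (hc : 0 < c) (hD : 0 < D) (hV : 0 ≤ V)
    (hT : 0 < T) (hDVT : D * V ^ 2 ≤ T ^ 3) :
    ∃ q ∈ Icc (0 : ℝ) 1,
      1 / 4 * min (1 / c) (1 / T) ≤ min (Iq q / D) (1 / (2 * (c + q * V))) := by
  set R := 1 / 4 * min (1 / c) (1 / T)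
  have hR : 0 < R := by positivity
  have hcR : 4 * R * c ≤ 1 :=
    (le_div_iff₀ hc).mp (by simp only [R]; linarith [min_le_left (1 / c) (1 / T)])
  have hTR : 4 * R * T ≤ 1 :=
    (le_div_iff₀ hT).mp (by simp only [R]; linarith [min_le_right (1 / c) (1 / T)])
  have hexp : 0 < exp (-(2 * (D * R))) ∧ exp (-(2 * (D * R))) ≤ 1 :=
    ⟨exp_pos _, exp_le_one_iff.mpr (by nlinarith)⟩
  set q := √(1 - exp (-(2 * (D * R))))
  have hq_sq : q ^ 2 ≤ 2 * (D * R) := by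
    rw [sq_sqrt (by linarith)]
    linarith [add_one_le_exp (-(2 * (D * R)))]
  have hqV : q * V ≤ T := by
    refine (pow_le_pow_iff_left₀ (by positivity) hT.le two_ne_zero).mp ?_
    nlinarith [mul_le_mul_of_nonneg_right hq_sq (sq_nonneg V)]
  refine ⟨q, ⟨sqrt_nonneg _, sqrt_le_one.mpr (by linarith)⟩, le_min ?_ ?_⟩
  · rw [Iq_sqrt_one_sub_exp (by positivity), mul_div_cancel_left₀ _ hD.ne']
  · rw [le_div_iff₀ (by positivity)]
    nlinarith

lemma alphaLB1_nonneg (p : ℝ → ℝ) : 0 ≤ alphaLB1 p := by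
  have hIq : Iq 0 = 0 := by simp [Iq]
  refine sSup_nonneg' ⟨0, ⟨0, ⟨le_rfl, zero_le_one⟩, ?_⟩, le_rfl⟩
  show min (Iq 0 / _) _ = 0
  rw [hIq, zero_div, zero_mul, add_zero]
  exact min_eq_left (by positivity)

lemma le_alphaLB1 {p : ℝ → ℝ} (hc : 0 < cTwo p ^ 2) (hV : 0 ≤ chiSq1 p - cTwo p ^ 2)
    {q : ℝ} (hq : q ∈ Icc (0 : ℝ) 1) :
    min (Iq q / dklGauss1 p) (1 / (2 * (cTwo p ^ 2 + q * (chiSq1 p - cTwo p ^ 2)))) ≤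
      alphaLB1 p := by
  refine le_csSup ⟨1 / (2 * cTwo p ^ 2), ?_⟩ ⟨q, hq, rfl⟩
  rintro _ ⟨r, hr, rfl⟩
  exact (min_le_right _ _).trans
    (one_div_le_one_div_of_le (by positivity) (by nlinarith [mul_nonneg hr.1 hV]))

theorem alphaLB1_char_general (p : ℝ → ℝ) (hpmeas : Measurable p) (hp0 : ∀ x, 0 ≤ p x)
    (hprob : IsProbabilityMeasure (volume.withDensity fun x => ENNReal.ofReal (p x))) :
    alphaLB1 p ≥ (1 / 4) *
      min (1 / cTwo p ^ 2)
        (1 / (dklGauss1 p ^ ((1 : ℝ) / 3) * (chiSq1 p - cTwo p ^ 2) ^ ((2 : ℝ) / 3))) := by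
  set T := dklGauss1 p ^ ((1 : ℝ) / 3) * (chiSq1 p - cTwo p ^ 2) ^ ((2 : ℝ) / 3)
  rcases le_or_gt (min (1 / cTwo p ^ 2) (1 / T)) 0 with hmin | hmin
  · linarith [alphaLB1_nonneg p]
  obtain ⟨hc, hT⟩ : 0 < cTwo p ^ 2 ∧ 0 < T := by simpa using hmin
  obtain ⟨hD, hV⟩ :=
    pos_and_nonneg_of_rpow_mul_rpow_pos (dklGauss1_nonneg hpmeas hp0 hprob) hT
  obtain ⟨q, hq, hle⟩ := exists_mem_Icc_quarter_min_le hc hD hV hT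
    (rpow_mul_rpow_pow_three hD.le hV).ge
  exact hle.trans (le_alphaLB1 hc hV hq)

/-- **Characterization of `α_lb(P)`.**  Under the assumptions of the 1-dimensional inner
bound (density `p`, mean zero, finite chi-square distance),
`α_lb(P) ≥ (1/4)·min{ 1/c₂², 1/(D_KL(P‖N(0,1))^{1/3} (χ² − c₂²)^{2/3}) }`. -/
theorem alphaLB1_char (p : ℝ → ℝ) (hpmeas : Measurable p) (hp0 : ∀ x, 0 ≤ p x)
    (hprob : IsProbabilityMeasure (volume.withDensity fun x => ENNReal.ofReal (p x)))
    (hmean : ∫ x, x * p x = 0)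
    (hchi : Integrable (fun x => (p x - stdPDF x) ^ 2 / stdPDF x)) :
    alphaLB1 p ≥ (1 / 4) *
      min (1 / cTwo p ^ 2)
        (1 / (dklGauss1 p ^ ((1 : ℝ) / 3) * (chiSq1 p - cTwo p ^ 2) ^ ((2 : ℝ) / 3))) :=
  alphaLB1_char_general p hpmeas hp0 hprob
end

section
/- Let P and Q be two probability measures with finite q-th moments (q > 1) on a Polish space S, and let M > 0 be such that W_p(P, Q) ≤ M for every p ∈ [1, q). Then W_q(P, Q) ≤ M. -/
open MeasureTheory Filter Topology
open scoped ENNReal NNReal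

/-!
Fix `p < q`, a coupling and `R ≥ d(x₀, y₀)`. Where both `d(x, x₀)` and `d(y, y₀)` are at most `R`,
`d(x, y) ≤ 3R` and so `d(x, y)^q ≤ (3R)^(q-p) d(x, y)^p`; elsewhere `d(x, y)` is at most three
times the larger of them, so `d(x, y)^q` is controlled by the tails beyond `R` of the `q`-th moments
of the marginals, which do not depend on the coupling. Hence
`W_q^q ≤ (3R)^(q-p) W_p^p + 3^q · tail(R)`; let `p → q` and then `R → ∞`.
-/

/-- The `p`-th Wasserstein distance between measures on a metric space:
`W_p(P, Q) = inf_γ ( ∫ dist(x, y)^p dγ )^{1/p}` over couplings `γ` of `P` and `Q`. -/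
noncomputable def Wp {S : Type*} [MeasurableSpace S] [PseudoMetricSpace S]
    (p : ℝ) (P Q : Measure S) : ℝ≥0∞ :=
  ⨅ γ ∈ {γ : Measure (S × S) | γ.map Prod.fst = P ∧ γ.map Prod.snd = Q},
    (∫⁻ z : S × S, ENNReal.ofReal (dist z.1 z.2) ^ p ∂γ) ^ (1 / p)

theorem tendsto_setLIntegral_lt_atTop {α : Type*} [MeasurableSpace α] {μ : Measure α}
    {f : α → ℝ≥0∞} (hf : ∫⁻ x, f x ∂μ ≠ ∞) {g : α → ℝ} (hg : Measurable g) :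
    Tendsto (fun R : ℝ => ∫⁻ x in {x | R < g x}, f x ∂μ) atTop (𝓝 0) := by
  have hs : ∀ R : ℝ, MeasurableSet {x | R < g x} := fun R => measurableSet_lt measurable_const hg
  have hanti : Antitone fun R : ℝ => {x | R < g x} := fun R R' h x hx => h.trans_lt hx
  have hempty : ⋂ R : ℝ, {x | R < g x} = ∅ :=
    Set.eq_empty_of_forall_notMem fun x hx => (Set.mem_iInter.1 hx (g x)).out.false
  have := isFiniteMeasure_withDensity hf
  -- The set integrals are the masses of the finite measure `μ.withDensity f`.
  have hlim := tendsto_measure_iInter_atTop (μ := μ.withDensity f)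
    (fun R => (hs R).nullMeasurableSet) hanti ⟨0, measure_ne_top _ _⟩
  rw [hempty, measure_empty] at hlim
  refine hlim.congr fun R => ?_
  simp only [Function.comp_apply, withDensity_apply _ (hs R)]

theorem Wp_rpow_eq_iInf {S : Type*} [MeasurableSpace S] [PseudoMetricSpace S]
    {p : ℝ} (hp : 0 < p) (P Q : Measure S) :
    Wp p P Q ^ p = ⨅ γ ∈ {γ : Measure (S × S) | γ.map Prod.fst = P ∧ γ.map Prod.snd = Q},
      ∫⁻ z : S × S, ENNReal.ofReal (dist z.1 z.2) ^ p ∂γ := by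
  simp only [Wp, ← ENNReal.orderIsoRpow_apply p hp, OrderIso.map_iInf]
  simp only [ENNReal.orderIsoRpow_apply, ← ENNReal.rpow_mul, one_div_mul_cancel hp.ne',
    ENNReal.rpow_one]

theorem ENNReal.ofReal_rpow_le_rpow_sub_mul_rpow {d K p q : ℝ} (hdK : d ≤ K) (hp : 0 ≤ p)
    (hpq : p ≤ q) :
    ENNReal.ofReal d ^ q ≤ ENNReal.ofReal K ^ (q - p) * ENNReal.ofReal d ^ p := by
  calc ENNReal.ofReal d ^ q = ENNReal.ofReal d ^ (q - p) * ENNReal.ofReal d ^ p := by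
        rw [← ENNReal.rpow_add_of_nonneg _ _ (sub_nonneg.2 hpq) hp, sub_add_cancel]
    _ ≤ _ := by gcongr

theorem tendsto_ofReal_rpow_sub_mul_rpow {K M : ℝ} (hK : 0 < K) (hM : 0 < M) (q : ℝ) :
    Tendsto (fun p => ENNReal.ofReal K ^ (q - p) * ENNReal.ofReal M ^ p) (𝓝 q)
      (𝓝 (ENNReal.ofReal M ^ q)) := by
  have hcont : Continuous fun p : ℝ => K ^ (q - p) * M ^ p := by
    fun_prop (disch := positivity)
  simpa [ENNReal.ofReal_rpow_of_pos, hK, hM, ← ENNReal.ofReal_mul, Real.rpow_nonneg hK.le]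
    using ENNReal.tendsto_ofReal (hcont.tendsto q)

section Tail

variable {S : Type*} [PseudoMetricSpace S]

noncomputable def momentTail (x₀ : S) (q R : ℝ) : S → ℝ≥0∞ :=
  {x | R < dist x x₀}.indicator fun x => ENNReal.ofReal (dist x x₀) ^ q

theorem momentTail_of_lt {x₀ x : S} {q R : ℝ} (h : R < dist x x₀) :
    momentTail x₀ q R x = ENNReal.ofReal (dist x x₀) ^ q :=
  Set.indicator_of_mem (s := {x | R < dist x x₀}) h _

theorem measurable_momentTail [MeasurableSpace S] [OpensMeasurableSpace S] (x₀ : S)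
    (q R : ℝ) :
    Measurable (momentTail x₀ q R) :=
  (by fun_prop : Measurable fun x => ENNReal.ofReal (dist x x₀) ^ q).indicator
    (measurableSet_lt measurable_const (by fun_prop))

theorem tendsto_lintegral_momentTail [MeasurableSpace S] [OpensMeasurableSpace S]
    {μ : Measure S} {x₀ : S} {q : ℝ} (hμ : ∫⁻ x, ENNReal.ofReal (dist x x₀) ^ q ∂μ ≠ ∞) :
    Tendsto (fun R => ∫⁻ x, momentTail x₀ q R x ∂μ) atTop (𝓝 0) := by
  simpa only [momentTail, lintegral_indicator (measurableSet_lt measurable_const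
    (by fun_prop : Measurable fun x => dist x x₀))]
    using tendsto_setLIntegral_lt_atTop hμ (by fun_prop)

theorem ofReal_dist_rpow_le {p q R : ℝ} (hp : 0 ≤ p) (hpq : p ≤ q) {x₀ y₀ : S}
    (hR : dist x₀ y₀ ≤ R) (x y : S) :
    ENNReal.ofReal (dist x y) ^ q ≤
      ENNReal.ofReal (3 * R) ^ (q - p) * ENNReal.ofReal (dist x y) ^ p
        + 3 ^ q * (momentTail x₀ q R x + momentTail y₀ q R y) := by
  have htri : dist x y ≤ dist x x₀ + dist x₀ y₀ + dist y y₀ := by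
    simpa only [dist_comm y₀ y] using dist_triangle4 x x₀ y₀ y
  set m := max (dist x x₀) (dist y y₀) with hm
  have hxm : dist x x₀ ≤ m := le_max_left _ _
  have hym : dist y y₀ ≤ m := le_max_right _ _
  rcases le_or_gt m R with hnear | hfar
  · exact le_add_right (ENNReal.ofReal_rpow_le_rpow_sub_mul_rpow (by linarith) hp hpq)
  have hdm : dist x y ≤ 3 * m := by linarith
  have hq : 0 ≤ q := hp.trans hpq
  refine le_add_left ?_
  calc ENNReal.ofReal (dist x y) ^ q ≤ ENNReal.ofReal (3 * m) ^ q := by gcongr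
    _ = 3 ^ q * ENNReal.ofReal m ^ q := by
      rw [ENNReal.ofReal_mul zero_le_three, ENNReal.mul_rpow_of_nonneg _ _ hq,
        ENNReal.ofReal_ofNat]
    _ ≤ 3 ^ q * (momentTail x₀ q R x + momentTail y₀ q R y) := by
      gcongr
      rcases max_choice (dist x x₀) (dist y y₀) with h | h <;> rw [hm, h] at hfar ⊢
      · exact (momentTail_of_lt hfar).ge.trans le_self_add
      · exact (momentTail_of_lt hfar).ge.trans le_add_self

end Tail

section Coupling

variable {S : Type*} [MeasurableSpace S] [PseudoMetricSpace S] [OpensMeasurableSpace S]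

theorem lintegral_dist_rpow_le (γ : Measure (S × S)) {p q R : ℝ} (hp : 0 ≤ p) (hpq : p ≤ q)
    {x₀ y₀ : S} (hR : dist x₀ y₀ ≤ R) :
    ∫⁻ z, ENNReal.ofReal (dist z.1 z.2) ^ q ∂γ ≤
      ENNReal.ofReal (3 * R) ^ (q - p) * ∫⁻ z, ENNReal.ofReal (dist z.1 z.2) ^ p ∂γ
        + 3 ^ q * (∫⁻ x, momentTail x₀ q R x ∂(γ.map Prod.fst)
          + ∫⁻ y, momentTail y₀ q R y ∂(γ.map Prod.snd)) := by
  have hK : ENNReal.ofReal (3 * R) ^ (q - p) ≠ ∞ :=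
    ENNReal.rpow_ne_top_of_nonneg (sub_nonneg.2 hpq) ENNReal.ofReal_ne_top
  have htail₁ : Measurable fun z : S × S => momentTail x₀ q R z.1 :=
    (measurable_momentTail x₀ q R).comp measurable_fst
  have htail₂ : Measurable fun z : S × S => momentTail y₀ q R z.2 :=
    (measurable_momentTail y₀ q R).comp measurable_snd
  have htails : Measurable fun z : S × S => momentTail x₀ q R z.1 + momentTail y₀ q R z.2 :=
    htail₁.add htail₂
  calc ∫⁻ z, ENNReal.ofReal (dist z.1 z.2) ^ q ∂γ
      ≤ ∫⁻ z, (ENNReal.ofReal (3 * R) ^ (q - p) * ENNReal.ofReal (dist z.1 z.2) ^ p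
          + 3 ^ q * (momentTail x₀ q R z.1 + momentTail y₀ q R z.2)) ∂γ :=
        lintegral_mono fun z => ofReal_dist_rpow_le hp hpq hR z.1 z.2
    _ = _ := by
      rw [lintegral_add_right _ (htails.const_mul _), lintegral_const_mul' _ _ hK,
        lintegral_const_mul _ htails, lintegral_add_left htail₁,
        lintegral_map (measurable_momentTail x₀ q R) measurable_fst,
        lintegral_map (measurable_momentTail y₀ q R) measurable_snd]

theorem Wp_rpow_le {p q R : ℝ} (hp : 0 < p) (hpq : p ≤ q) (hR₀ : 0 < R) {x₀ y₀ : S}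
    (hR : dist x₀ y₀ ≤ R) (P Q : Measure S) :
    Wp q P Q ^ q ≤ ENNReal.ofReal (3 * R) ^ (q - p) * Wp p P Q ^ p
      + 3 ^ q * (∫⁻ x, momentTail x₀ q R x ∂P + ∫⁻ y, momentTail y₀ q R y ∂Q) := by
  have hK₀ : ENNReal.ofReal (3 * R) ^ (q - p) ≠ 0 := by
    simp [ENNReal.rpow_eq_zero_iff, hR₀, hpq]
  have hK : ENNReal.ofReal (3 * R) ^ (q - p) ≠ ∞ :=
    ENNReal.rpow_ne_top_of_nonneg (sub_nonneg.2 hpq) ENNReal.ofReal_ne_top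
  simp only [Wp_rpow_eq_iInf (hp.trans_le hpq), Wp_rpow_eq_iInf hp,
    ENNReal.mul_iInf_of_ne hK₀ hK, ENNReal.iInf_add]
  refine iInf₂_mono fun γ ⟨hγ₁, hγ₂⟩ => ?_
  simpa only [hγ₁, hγ₂] using lintegral_dist_rpow_le γ hp.le hpq hR

end Coupling

theorem Wq_le_of_Wp_le_general {S : Type*} [MeasurableSpace S] [MetricSpace S]
    [BorelSpace S]
    (P Q : Measure S)
    (q : ℝ) (hq : 1 < q)
    (hPq : ∃ x₀ : S, (∫⁻ x, ENNReal.ofReal (dist x x₀) ^ q ∂P) < ⊤)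
    (hQq : ∃ x₀ : S, (∫⁻ x, ENNReal.ofReal (dist x x₀) ^ q ∂Q) < ⊤)
    (M : ℝ) (hM : 0 < M)
    (h : ∀ p : ℝ, 1 ≤ p → p < q → Wp p P Q ≤ ENNReal.ofReal M) :
    Wp q P Q ≤ ENNReal.ofReal M := by
  obtain ⟨x₀, hx₀⟩ := hPq
  obtain ⟨y₀, hy₀⟩ := hQq
  have hq₀ : 0 < q := one_pos.trans hq
  set T : ℝ → ℝ≥0∞ := fun R =>
    3 ^ q * (∫⁻ x, momentTail x₀ q R x ∂P + ∫⁻ y, momentTail y₀ q R y ∂Q)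
  have hT : Tendsto T atTop (𝓝 0) := by
    simpa using ENNReal.Tendsto.const_mul ((tendsto_lintegral_momentTail hx₀.ne).add
      (tendsto_lintegral_momentTail hy₀.ne)) (.inr (by simp [ENNReal.rpow_eq_top_iff]))
  have hbound : ∀ R, 0 < R → dist x₀ y₀ ≤ R → Wp q P Q ^ q ≤ ENNReal.ofReal M ^ q + T R := by
    intro R hR₀ hR
    have hK : 0 < 3 * R := by positivity
    refine ge_of_tendsto (((tendsto_ofReal_rpow_sub_mul_rpow hK hM q).add_const (T R)).mono_left
      (nhdsWithin_le_nhds (s := Set.Iio q))) ?_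
    filter_upwards [Ioo_mem_nhdsLT hq] with p ⟨hp, hpq⟩
    calc Wp q P Q ^ q ≤ ENNReal.ofReal (3 * R) ^ (q - p) * Wp p P Q ^ p + T R :=
          Wp_rpow_le (one_pos.trans hp) hpq.le hR₀ hR P Q
      _ ≤ _ := by gcongr; exact h p hp.le hpq
  have hWq : Wp q P Q ^ q ≤ ENNReal.ofReal M ^ q := by
    refine ge_of_tendsto (by simpa using tendsto_const_nhds.add hT) ?_
    filter_upwards [eventually_gt_atTop 0, eventually_ge_atTop (dist x₀ y₀)] with R using hbound R
  exact (ENNReal.rpow_le_rpow_iff hq₀).1 hWq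

/-- **Continuity of `W_p` in `p`.**  Let `P`, `Q` be probability measures with finite `q`-th
moments (`q > 1`) on a Polish space `S`, and `M > 0` with `W_p(P, Q) ≤ M` for every
`p ∈ [1, q)`.  Then `W_q(P, Q) ≤ M`. -/
theorem Wq_le_of_Wp_le {S : Type*} [MeasurableSpace S] [MetricSpace S]
    [TopologicalSpace.SeparableSpace S] [CompleteSpace S] [BorelSpace S]
    (P Q : Measure S) (hP : IsProbabilityMeasure P) (hQ : IsProbabilityMeasure Q)
    (q : ℝ) (hq : 1 < q)
    (hPq : ∃ x₀ : S, (∫⁻ x, ENNReal.ofReal (dist x x₀) ^ q ∂P) < ⊤)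
    (hQq : ∃ x₀ : S, (∫⁻ x, ENNReal.ofReal (dist x x₀) ^ q ∂Q) < ⊤)
    (M : ℝ) (hM : 0 < M)
    (h : ∀ p : ℝ, 1 ≤ p → p < q → Wp p P Q ≤ ENNReal.ofReal M) :
    Wp q P Q ≤ ENNReal.ofReal M :=
  Wq_le_of_Wp_le_general P Q q hq hPq hQq M hM h
end

section
/- Let p = (p_{ij})_{i,j∈[M]} be a probability distribution on [M] × [M] with p_{ij} > 0 for all i, j, let (q_i)_{i∈[M]} be a probability vector with q_i > 0 for all i, and let q = (q_{ij}) be the minimizer of D_KL(q ‖ p) over probability distributions on [M] × [M] with Σ_j q_{ij} = q_i and Σ_j q_{ji} = q_i for all i ∈ [M]. Then: (a) there exist vectors f = (f_i) and g = (g_i) with positive components such that q_{ij} = f_i g_j p_{ij} for all i, j, and f, g are uniquely determined (up to a multiplicative constant) by the equations q_i = f_i Σ_j g_j p_{ij} and q_j = g_j Σ_i f_i p_{ij}; (b) for any q' = (q'_{ij}) satisfying the same marginal constraints, Σ_{i,j} (q'_{ij} − q_{ij}) log(q_{ij}/p_{ij}) = 0; (c) for all i, j ∈ [M], q_{ij}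 ≥ q_i q_j c³ where c = min_{i,j∈[M]} p_{ij}. -/
/-!
A minimiser `q` vanishes nowhere: if `q_{ij} = 0`, then by convexity of `x log x` a step of
size `t` from `q` towards the product coupling `qv ⊗ qv` changes the divergence by at most
`t qv_i qv_j log t + O(t)`, which is negative for small `t > 0`. Hence `q` is interior to the
constraint set, so it is a critical point along every direction `s` with vanishing marginals:
`log (q/p)` is orthogonal to all such `s`, which (testing against
`(e_i - e_{i₀}) ⊗ (e_j - e_{j₀})`) means `log (q_{ij}/p_{ij}) = A_i + B_j`. This gives (a) with
`f = exp A`, `g = exp B`, and (b). Two scalings `q₁, q₂` of `p` with the same marginals satisfy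
`Σ (q₁ - q₂)(log q₁ - log q₂) = 0` with nonnegative terms, so `q₁ = q₂`. For (c),
`qv_i ≤ f_i Σ g`, `qv_j ≤ g_j Σ f` and `c Σ f Σ g ≤ Σ q = 1`.
-/

open Filter Topology

/-- Discrete Kullback–Leibler divergence on `Fin M × Fin M`:
`D_KL(q ‖ p) = Σ_{i,j} q_{ij} log(q_{ij}/p_{ij})`. -/
noncomputable def dklD {M : ℕ} (q p : Fin M → Fin M → ℝ) : ℝ :=
  ∑ i, ∑ j, q i j * Real.log (q i j / p i j)

open Real

noncomputable def relEntropy {ι : Type*} [Fintype ι] (q p : ι → ℝ) : ℝ :=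
  ∑ x, q x * log (q x / p x)

lemma dklD_eq_relEntropy {M : ℕ} (q p : Fin M → Fin M → ℝ) :
    dklD q p = relEntropy (Function.uncurry q) (Function.uncurry p) :=
  (Fintype.sum_prod_type' fun i j => q i j * log (q i j / p i j)).symm

lemma mul_log_div_eq {c : ℝ} (hc : c ≠ 0) (x : ℝ) :
    x * log (x / c) = x * log x - x * log c := by
  rcases eq_or_ne x 0 with rfl | hx
  · simp
  · rw [log_div hx hc]; ring

lemma convexOn_mul_log_div {c : ℝ} (hc : c ≠ 0) :
    ConvexOn ℝ (Set.Ici 0) fun x => x * log (x / c) := by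
  rw [funext (mul_log_div_eq hc)]
  exact convexOn_mul_log.sub ((LinearMap.mul ℝ ℝ).flip (log c) |>.concaveOn (convex_Ici 0))

lemma hasDerivAt_mul_log_div {c x : ℝ} (hc : c ≠ 0) (hx : x ≠ 0) :
    HasDerivAt (fun y => y * log (y / c)) (log (x / c) + 1) x := by
  rw [funext (mul_log_div_eq hc), log_div hx hc]
  exact ((hasDerivAt_mul_log hx).sub ((hasDerivAt_id' x).mul_const (log c))).congr_deriv (by ring)

section RelEntropy

variable {ι : Type*} [Fintype ι]

lemma hasDerivAt_relEntropy_add_smul {q p : ι → ℝ} (hq : ∀ x, q x ≠ 0) (hp : ∀ x, p x ≠ 0)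
    (s : ι → ℝ) :
    HasDerivAt (fun ε : ℝ => relEntropy (q + ε • s) p) (∑ x, s x * (log (q x / p x) + 1)) 0 := by
  refine HasDerivAt.fun_sum fun x _ => ?_
  have hline : HasDerivAt (fun ε : ℝ => q x + ε * s x) (s x) 0 := by
    simpa using ((hasDerivAt_id (0 : ℝ)).mul_const (s x)).const_add (q x)
  have hcomp := (hasDerivAt_mul_log_div (hp x) (by simpa using hq x)).comp (0 : ℝ) hline
  simpa [Function.comp_def, mul_comm] using hcomp

lemma sum_mul_log_div_eq_zero_of_isLocalMin {q p s : ι → ℝ} (hq : ∀ x, q x ≠ 0)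
    (hp : ∀ x, p x ≠ 0) (hs : ∑ x, s x = 0)
    (hmin : IsLocalMin (fun ε : ℝ => relEntropy (q + ε • s) p) 0) :
    ∑ x, s x * log (q x / p x) = 0 := by
  have hderiv := hmin.hasDerivAt_eq_zero (hasDerivAt_relEntropy_add_smul hq hp s)
  simpa [mul_add, Finset.sum_add_distrib, hs] using hderiv

lemma relEntropy_segment_le [DecidableEq ι] {q r p : ι → ℝ} (hp : ∀ x, 0 < p x)
    (hq : ∀ x, 0 ≤ q x) (hr : ∀ x, 0 ≤ r x) {x₀ : ι} (hq₀ : q x₀ = 0) {t : ℝ} (ht₀ : 0 < t)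
    (ht₁ : t ≤ 1) :
    relEntropy ((1 - t) • q + t • r) p ≤
      (1 - t) * relEntropy q p + t * relEntropy r p + t * r x₀ * log t := by
  have hpt : ∀ x, ((1 - t) * q x + t * r x) * log (((1 - t) * q x + t * r x) / p x) ≤
      (1 - t) * (q x * log (q x / p x)) + t * (r x * log (r x / p x)) +
        if x = x₀ then t * r x₀ * log t else 0 := by
    intro x
    split_ifs with hx
    · subst hx
      rcases (hr x).eq_or_lt with h | h
      · simp [← h, hq₀]
      simp only [hq₀, mul_zero, zero_add, zero_div, log_zero]
      rw [mul_div_assoc, log_mul ht₀.ne' (div_pos h (hp x)).ne']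
      exact (by ring : _ = _).le
    · simpa [smul_eq_mul] using
        (convexOn_mul_log_div (hp x).ne').2 (hq x) (hr x) (sub_nonneg.2 ht₁) ht₀.le (by ring)
  calc relEntropy ((1 - t) • q + t • r) p
      = ∑ x, ((1 - t) * q x + t * r x) * log (((1 - t) * q x + t * r x) / p x) := rfl
    _ ≤ _ := Finset.sum_le_sum fun x _ => hpt x
    _ = _ := by simp [relEntropy, Finset.sum_add_distrib, Finset.mul_sum]

lemma eventually_relEntropy_segment_lt [DecidableEq ι] {q r p : ι → ℝ} (hp : ∀ x, 0 < p x)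
    (hq : ∀ x, 0 ≤ q x) (hr : ∀ x, 0 ≤ r x) {x₀ : ι} (hq₀ : q x₀ = 0) (hr₀ : 0 < r x₀) :
    ∀ᶠ t in 𝓝[>] (0 : ℝ), relEntropy ((1 - t) • q + t • r) p < relEntropy q p := by
  set K := relEntropy r p - relEntropy q p
  have hlog : ∀ᶠ t in 𝓝[>] (0 : ℝ), log t < -K / r x₀ :=
    tendsto_log_nhdsGT_zero.eventually (eventually_lt_atBot _)
  filter_upwards [hlog, Ioo_mem_nhdsGT one_pos] with t hlog ht
  have hK : K + r x₀ * log t < 0 := by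
    rw [lt_div_iff₀ hr₀] at hlog; linarith
  have hbound := relEntropy_segment_le hp hq hr hq₀ ht.1 ht.2.le
  nlinarith [mul_neg_of_pos_of_neg ht.1 hK]

end RelEntropy

section Marginals

variable {α β : Type*} [Fintype α] [Fintype β]

def HasMarginals (μ : α → ℝ) (ν : β → ℝ) (q : α → β → ℝ) : Prop :=
  (∀ a, ∑ b, q a b = μ a) ∧ ∀ b, ∑ a, q a b = ν b

lemma hasMarginals_mul (u : α → ℝ) (v : β → ℝ) :
    HasMarginals (fun a => u a * ∑ b, v b) (fun b => (∑ a, u a) * v b) fun a b => u a * v b :=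
  ⟨fun _ => (Finset.mul_sum ..).symm, fun _ => (Finset.sum_mul ..).symm⟩

lemma hasMarginals_scaling_iff {μ : α → ℝ} {ν : β → ℝ} {f : α → ℝ} {g : β → ℝ}
    {p : α → β → ℝ} :
    HasMarginals μ ν (fun a b => f a * g b * p a b) ↔
      (∀ a, μ a = f a * ∑ b, g b * p a b) ∧ ∀ b, ν b = g b * ∑ a, f a * p a b := by
  have hrow (a : α) : ∑ b, f a * g b * p a b = f a * ∑ b, g b * p a b := by
    simp only [Finset.mul_sum, mul_assoc]
  have hcol (b : β) : ∑ a, f a * g b * p a b = g b * ∑ a, f a * p a b := by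
    simp only [Finset.mul_sum, mul_left_comm, mul_comm]
  simp only [HasMarginals, hrow, hcol, eq_comm]

variable {μ : α → ℝ} {ν : β → ℝ} {q s : α → β → ℝ}

lemma HasMarginals.sub {q' : α → β → ℝ} (h : HasMarginals μ ν q) (h' : HasMarginals μ ν q') :
    HasMarginals 0 0 (q - q') :=
  ⟨fun a => by simp [Finset.sum_sub_distrib, h.1, h'.1],
    fun b => by simp [Finset.sum_sub_distrib, h.2, h'.2]⟩

lemma HasMarginals.add_smul (h : HasMarginals μ ν q) (hs : HasMarginals 0 0 s) (ε : ℝ) :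
    HasMarginals μ ν (q + ε • s) :=
  ⟨fun a => by simp [Finset.sum_add_distrib, ← Finset.mul_sum, h.1, hs.1 a],
    fun b => by simp [Finset.sum_add_distrib, ← Finset.mul_sum, h.2, hs.2 b]⟩

lemma HasMarginals.sum_sum_mul_add_eq_zero (hs : HasMarginals 0 0 s) (A : α → ℝ) (B : β → ℝ) :
    ∑ a, ∑ b, s a b * (A a + B b) = 0 := by
  simp only [mul_add, Finset.sum_add_distrib]
  rw [Finset.sum_comm (f := fun a b => s a b * B b)]
  simp [← Finset.sum_mul, hs.1, hs.2]

lemma exists_add_of_forall_hasMarginals_zero [Nonempty α] [Nonempty β] [DecidableEq α]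
    [DecidableEq β] {L : α → β → ℝ}
    (hL : ∀ s, HasMarginals 0 0 s → ∑ a, ∑ b, s a b * L a b = 0) :
    ∃ A : α → ℝ, ∃ B : β → ℝ, ∀ a b, L a b = A a + B b := by
  obtain ⟨a₀⟩ := ‹Nonempty α›
  obtain ⟨b₀⟩ := ‹Nonempty β›
  refine ⟨fun a => L a b₀ - L a₀ b₀, fun b => L a₀ b, fun a b => ?_⟩
  let u : α → ℝ := Pi.single a 1 - Pi.single a₀ 1
  let v : β → ℝ := Pi.single b 1 - Pi.single b₀ 1
  have hswap := hL (fun a' b' => u a' * v b')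
    (by simpa [u, v, Pi.zero_def] using hasMarginals_mul u v)
  simp only [u, v, Pi.sub_apply, Pi.single_apply, mul_sub, mul_ite, mul_one, mul_zero, sub_mul,
    ite_mul, one_mul, zero_mul, Finset.sum_sub_distrib, Finset.sum_ite_eq', Finset.mem_univ,
    ↓reduceIte] at hswap
  linarith

lemma HasMarginals.eq_of_log_sub_log_eq_add {q₁ q₂ : α → β → ℝ} (h₁ : HasMarginals μ ν q₁)
    (h₂ : HasMarginals μ ν q₂) (hq₁ : ∀ a b, 0 < q₁ a b) (hq₂ : ∀ a b, 0 < q₂ a b)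
    {A : α → ℝ} {B : β → ℝ} (hAB : ∀ a b, log (q₁ a b) - log (q₂ a b) = A a + B b) :
    q₁ = q₂ := by
  have hsum : ∑ a, ∑ b, (q₁ a b - q₂ a b) * (log (q₁ a b) - log (q₂ a b)) = 0 := by
    simp_rw [hAB]
    exact (h₁.sub h₂).sum_sum_mul_add_eq_zero A B
  have hterm (a : α) (b : β) : 0 ≤ (q₁ a b - q₂ a b) * (log (q₁ a b) - log (q₂ a b)) := by
    rcases le_total (q₁ a b) (q₂ a b) with h | h
    · exact mul_nonneg_of_nonpos_of_nonpos (sub_nonpos.2 h)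
        (sub_nonpos.2 (log_le_log (hq₁ a b) h))
    · exact mul_nonneg (sub_nonneg.2 h) (sub_nonneg.2 (log_le_log (hq₂ a b) h))
  by_contra hne
  obtain ⟨a, b, hab⟩ : ∃ a b, q₁ a b ≠ q₂ a b := by
    by_contra! h
    exact hne (funext₂ h)
  have hterm_pos : 0 < (q₁ a b - q₂ a b) * (log (q₁ a b) - log (q₂ a b)) := by
    rcases hab.lt_or_gt with h | h
    · exact mul_pos_of_neg_of_neg (sub_neg.2 h) (sub_neg.2 (log_lt_log (hq₁ a b) h))
    · exact mul_pos (sub_pos.2 h) (sub_pos.2 (log_lt_log (hq₂ a b) h))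
  refine hsum.not_gt (Finset.sum_pos' (fun a _ => Finset.sum_nonneg fun b _ => hterm a b) ?_)
  exact ⟨a, Finset.mem_univ a,
    Finset.sum_pos' (fun b _ => hterm a b) ⟨b, Finset.mem_univ b, hterm_pos⟩⟩

lemma exists_eq_mul_of_hasMarginals_scaling [Nonempty α] [Nonempty β] {p : α → β → ℝ}
    (hp : ∀ a b, 0 < p a b) {f₁ f₂ : α → ℝ} {g₁ g₂ : β → ℝ} (hf₁ : ∀ a, 0 < f₁ a)
    (hg₁ : ∀ b, 0 < g₁ b) (hf₂ : ∀ a, 0 < f₂ a) (hg₂ : ∀ b, 0 < g₂ b)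
    (h₁ : HasMarginals μ ν fun a b => f₁ a * g₁ b * p a b)
    (h₂ : HasMarginals μ ν fun a b => f₂ a * g₂ b * p a b) :
    ∃ c : ℝ, 0 < c ∧ (∀ a, f₂ a = c * f₁ a) ∧ ∀ b, g₂ b = g₁ b / c := by
  have hlog (a : α) (b : β) : log (f₂ a * g₂ b * p a b) - log (f₁ a * g₁ b * p a b) =
      (log (f₂ a) - log (f₁ a)) + (log (g₂ b) - log (g₁ b)) := by
    simp only [log_mul (mul_pos (hf₂ a) (hg₂ b)).ne' (hp a b).ne',
      log_mul (mul_pos (hf₁ a) (hg₁ b)).ne' (hp a b).ne', log_mul (hf₂ a).ne' (hg₂ b).ne',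
      log_mul (hf₁ a).ne' (hg₁ b).ne']
    ring
  have heq := h₂.eq_of_log_sub_log_eq_add h₁
    (fun a b => mul_pos (mul_pos (hf₂ a) (hg₂ b)) (hp a b))
    (fun a b => mul_pos (mul_pos (hf₁ a) (hg₁ b)) (hp a b)) hlog
  have hfg (a : α) (b : β) : f₂ a * g₂ b = f₁ a * g₁ b :=
    mul_right_cancel₀ (hp a b).ne' (congr_fun₂ heq a b)
  obtain ⟨a₀⟩ := ‹Nonempty α›
  obtain ⟨b₀⟩ := ‹Nonempty β›
  have := hg₂ b₀
  have := hf₁ a₀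
  have := hg₁ b₀
  refine ⟨g₁ b₀ / g₂ b₀, div_pos (hg₁ b₀) (hg₂ b₀), fun a => ?_, fun b => ?_⟩
  · field_simp
    linear_combination hfg a b₀
  · field_simp
    refine mul_left_cancel₀ (hf₁ a₀).ne' ?_
    linear_combination g₂ b₀ * hfg a₀ b - g₂ b * hfg a₀ b₀

lemma mul_mul_sq_le_of_hasMarginals_scaling {p : α → β → ℝ} {f : α → ℝ} {g : β → ℝ}
    (hf : ∀ a, 0 < f a) (hg : ∀ b, 0 < g b) {c : ℝ} (hc : 0 < c) (hcp : ∀ a b, c ≤ p a b)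
    (hp₁ : ∀ a b, p a b ≤ 1) (hμ : ∑ a, μ a = 1)
    (h : HasMarginals μ ν fun a b => f a * g b * p a b) (a : α) (b : β) :
    μ a * ν b * c ^ 2 ≤ f a * g b * p a b := by
  have hp (a : α) (b : β) : 0 < p a b := hc.trans_le (hcp a b)
  set Sf := ∑ a, f a
  set Sg := ∑ b, g b
  have hmass : Sf * Sg * c ≤ 1 := calc
    Sf * Sg * c = ∑ a, ∑ b, f a * g b * c := by
      simp only [Sf, Sg, Finset.sum_mul, Finset.mul_sum]
      exact Finset.sum_comm
    _ ≤ ∑ a, ∑ b, f a * g b * p a b := by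
      gcongr with a _ b _
      · exact (mul_pos (hf a) (hg b)).le
      · exact hcp a b
    _ = 1 := by simp only [h.1, hμ]
  have hrow : μ a ≤ f a * Sg := by
    rw [← h.1 a, Finset.mul_sum]
    gcongr with b
    exact mul_le_of_le_one_right (mul_pos (hf a) (hg b)).le (hp₁ a b)
  have hcol : ν b ≤ Sf * g b := by
    rw [← h.2 b, Finset.sum_mul]
    gcongr with a
    exact mul_le_of_le_one_right (mul_pos (hf a) (hg b)).le (hp₁ a b)
  have hν : 0 ≤ ν b :=
    h.2 b ▸ Finset.sum_nonneg fun a _ => (mul_pos (mul_pos (hf a) (hg b)) (hp a b)).le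
  calc μ a * ν b * c ^ 2 ≤ (f a * Sg) * (Sf * g b) * c ^ 2 := by
        gcongr
        exact mul_nonneg (hf a).le (Finset.sum_nonneg fun b _ => (hg b).le)
    _ = f a * g b * (Sf * Sg * c) * c := by ring
    _ ≤ f a * g b * 1 * c := by gcongr; exact (mul_pos (hf a) (hg b)).le
    _ ≤ f a * g b * p a b := by
      rw [mul_one]
      gcongr
      exacts [(mul_pos (hf a) (hg b)).le, hcp a b]

lemma mul_mul_iInf_pow_three_le_of_hasMarginals_scaling [Nonempty α] [Nonempty β]
    {p : α → β → ℝ} (hp : ∀ a b, 0 < p a b) (hpsum : ∑ a, ∑ b, p a b = 1) {f : α → ℝ}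
    {g : β → ℝ} (hf : ∀ a, 0 < f a) (hg : ∀ b, 0 < g b) (hμ : ∑ a, μ a = 1)
    (h : HasMarginals μ ν fun a b => f a * g b * p a b) (a : α) (b : β) :
    μ a * ν b * (⨅ x : α × β, p x.1 x.2) ^ 3 ≤ f a * g b * p a b := by
  set c := ⨅ x : α × β, p x.1 x.2
  have hcp (a : α) (b : β) : c ≤ p a b := ciInf_le (Finite.bddBelow_range _) (a, b)
  have hc : 0 < c := by
    obtain ⟨x, hx⟩ := exists_eq_ciInf_of_finite (f := fun x : α × β => p x.1 x.2)
    exact (hp x.1 x.2).trans_eq hx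
  have hp₁ (a : α) (b : β) : p a b ≤ 1 := by
    rw [← Fintype.sum_prod_type'] at hpsum
    exact hpsum ▸ Finset.single_le_sum (f := fun x : α × β => p x.1 x.2)
      (fun x _ => (hp x.1 x.2).le) (Finset.mem_univ (a, b))
  have hμν : 0 ≤ μ a * ν b := by
    rw [← h.1 a, ← h.2 b]
    exact mul_nonneg (Finset.sum_nonneg fun b _ => (mul_pos (mul_pos (hf a) (hg b)) (hp a b)).le)
      (Finset.sum_nonneg fun a _ => (mul_pos (mul_pos (hf a) (hg b)) (hp a b)).le)
  calc μ a * ν b * c ^ 3 ≤ μ a * ν b * c ^ 2 :=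
        mul_le_mul_of_nonneg_left (pow_le_pow_of_le_one hc.le ((hcp a b).trans (hp₁ a b))
          (by norm_num)) hμν
    _ ≤ f a * g b * p a b := mul_mul_sq_le_of_hasMarginals_scaling hf hg hc hcp hp₁ hμ h a b

lemma pos_of_isMinOn_relEntropy [DecidableEq α] [DecidableEq β] {p q : α → β → ℝ}
    (hp : ∀ a b, 0 < p a b) (hμ : ∀ a, 0 < μ a) (hν : ∀ b, 0 < ν b) (hμ₁ : ∑ a, μ a = 1)
    (hν₁ : ∑ b, ν b = 1) (hq : 0 ≤ q ∧ HasMarginals μ ν q)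
    (hmin : IsMinOn (fun q' => relEntropy (Function.uncurry q') (Function.uncurry p))
      {q' | 0 ≤ q' ∧ HasMarginals μ ν q'} q) (a : α) (b : β) :
    0 < q a b := by
  refine (hq.1 a b).lt_of_ne' fun hab => ?_
  let r : α → β → ℝ := fun a b => μ a * ν b
  have hr : 0 ≤ r ∧ HasMarginals μ ν r :=
    ⟨fun a b => (mul_pos (hμ a) (hν b)).le, by simpa [hμ₁, hν₁] using hasMarginals_mul μ ν⟩
  obtain ⟨t, hlt, ht⟩ := ((eventually_relEntropy_segment_lt (fun x => hp x.1 x.2)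
    (fun x => hq.1 x.1 x.2) (fun x => hr.1 x.1 x.2) (x₀ := (a, b)) hab
    (mul_pos (hμ a) (hν b))).and (Ioo_mem_nhdsGT one_pos)).exists
  have hfeas : (1 - t) • q + t • r ∈ {q' | 0 ≤ q' ∧ HasMarginals μ ν q'} := by
    refine ⟨fun a b => ?_, ?_⟩
    · exact add_nonneg (mul_nonneg (sub_nonneg.2 ht.2.le) (hq.1 a b))
        (mul_nonneg ht.1.le (hr.1 a b))
    · rw [show (1 - t) • q + t • r = q + t • (r - q) by module]
      exact hq.2.add_smul (hr.2.sub hq.2) t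
  exact hlt.not_ge (isMinOn_iff.1 hmin _ hfeas)

lemma sum_sum_mul_log_div_eq_zero_of_isMinOn_relEntropy {p q s : α → β → ℝ}
    (hp : ∀ a b, 0 < p a b) (hq : ∀ a b, 0 < q a b) (hqm : HasMarginals μ ν q)
    (hmin : IsMinOn (fun q' => relEntropy (Function.uncurry q') (Function.uncurry p))
      {q' | 0 ≤ q' ∧ HasMarginals μ ν q'} q) (hs : HasMarginals 0 0 s) :
    ∑ a, ∑ b, s a b * log (q a b / p a b) = 0 := by
  have hpos : ∀ᶠ ε in 𝓝 (0 : ℝ), ∀ a b, 0 < q a b + ε * s a b :=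
    eventually_all.2 fun a => eventually_all.2 fun b =>
      (continuous_const.add (continuous_id.mul continuous_const)).continuousAt.eventually
        (lt_mem_nhds (by simpa using hq a b))
  have hloc : IsLocalMin (fun ε : ℝ =>
      relEntropy (Function.uncurry q + ε • Function.uncurry s) (Function.uncurry p)) 0 := by
    filter_upwards [hpos] with ε hε
    simp only [zero_smul, add_zero]
    exact isMinOn_iff.1 hmin _ ⟨fun a b => (hε a b).le, hqm.add_smul hs ε⟩
  rw [← Fintype.sum_prod_type']
  refine sum_mul_log_div_eq_zero_of_isLocalMin (fun x => (hq x.1 x.2).ne')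
    (fun x => (hp x.1 x.2).ne') ?_ hloc
  simp [Fintype.sum_prod_type', hs.1]

end Marginals

/-- **Properties of the information projection.**  Let `p` be a strictly positive
distribution on `[M] × [M]`, `qv` a strictly positive probability vector, and `q` the
minimizer of `D_KL(· ‖ p)` under the constraint that both marginals equal `qv`.  Then
(a) `q_{ij} = f_i g_j p_{ij}` for positive `f, g` uniquely determined, up to a
multiplicative constant, by `qv_i = f_i Σ_j g_j p_{ij}` and `qv_j = g_j Σ_i f_i p_{ij}`;
(b) `Σ_{ij} (q'_{ij} − q_{ij}) log(q_{ij}/p_{ij}) = 0` for any `q'` with the same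
marginals; and
(c) `q_{ij} ≥ qv_i qv_j c³` where `c = min_{ij} p_{ij}`. -/
theorem info_projection_properties {M : ℕ} [NeZero M]
    (p : Fin M → Fin M → ℝ) (hp : ∀ i j, 0 < p i j) (hpsum : ∑ i, ∑ j, p i j = 1)
    (qv : Fin M → ℝ) (hqv : ∀ i, 0 < qv i) (hqvsum : ∑ i, qv i = 1)
    (q : Fin M → Fin M → ℝ) (hq0 : ∀ i j, 0 ≤ q i j)
    (hqrow : ∀ i, ∑ j, q i j = qv i) (hqcol : ∀ j, ∑ i, q i j = qv j)
    (hmin : ∀ q' : Fin M → Fin M → ℝ, (∀ i j, 0 ≤ q' i j) →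
      (∀ i, ∑ j, q' i j = qv i) → (∀ j, ∑ i, q' i j = qv j) →
      dklD q p ≤ dklD q' p) :
    (∃ f g : Fin M → ℝ, (∀ i, 0 < f i) ∧ (∀ i, 0 < g i) ∧
      (∀ i j, q i j = f i * g j * p i j) ∧
      (∀ i, qv i = f i * ∑ j, g j * p i j) ∧
      (∀ j, qv j = g j * ∑ i, f i * p i j) ∧
      (∀ f' g' : Fin M → ℝ, (∀ i, 0 < f' i) → (∀ i, 0 < g' i) →
        (∀ i, qv i = f' i * ∑ j, g' j * p i j) →
        (∀ j, qv j = g' j * ∑ i, f' i * p i j) →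
        ∃ c : ℝ, 0 < c ∧ (∀ i, f' i = c * f i) ∧ ∀ j, g' j = g j / c)) ∧
    (∀ q' : Fin M → Fin M → ℝ, (∀ i j, 0 ≤ q' i j) →
      (∀ i, ∑ j, q' i j = qv i) → (∀ j, ∑ i, q' i j = qv j) →
      ∑ i, ∑ j, (q' i j - q i j) * Real.log (q i j / p i j) = 0) ∧
    (∀ i j, qv i * qv j * (⨅ ij : Fin M × Fin M, p ij.1 ij.2) ^ 3 ≤ q i j) := by
  have hq : 0 ≤ q ∧ HasMarginals qv qv q := ⟨fun i j => hq0 i j, hqrow, hqcol⟩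
  have hmin' : IsMinOn (fun q' => relEntropy (Function.uncurry q') (Function.uncurry p))
      {q' | 0 ≤ q' ∧ HasMarginals qv qv q'} q := isMinOn_iff.2 fun q' hq' => by
    simpa only [dklD_eq_relEntropy] using hmin q' (fun i j => hq'.1 i j) hq'.2.1 hq'.2.2
  have hqpos := pos_of_isMinOn_relEntropy hp hqv hqv hqvsum hqvsum hq hmin'
  have hstat (s : Fin M → Fin M → ℝ) (hs : HasMarginals 0 0 s) :=
    sum_sum_mul_log_div_eq_zero_of_isMinOn_relEntropy hp hqpos hq.2 hmin' hs
  obtain ⟨A, B, hAB⟩ :=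
    exists_add_of_forall_hasMarginals_zero (L := fun i j => log (q i j / p i j)) hstat
  have hfact (i j : Fin M) : q i j = exp (A i) * exp (B j) * p i j := by
    rw [← exp_add, ← hAB i j, exp_log (div_pos (hqpos i j) (hp i j)),
      div_mul_cancel₀ _ (hp i j).ne']
  have hscal : HasMarginals qv qv fun i j => exp (A i) * exp (B j) * p i j :=
    funext₂ hfact ▸ hq.2
  obtain ⟨hrow, hcol⟩ := hasMarginals_scaling_iff.1 hscal
  refine ⟨⟨_, _, fun i => exp_pos (A i), fun j => exp_pos (B j), hfact, hrow, hcol,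
    fun f' g' hf' hg' h₁ h₂ => exists_eq_mul_of_hasMarginals_scaling hp (fun i => exp_pos (A i))
      (fun j => exp_pos (B j)) hf' hg' hscal (hasMarginals_scaling_iff.2 ⟨h₁, h₂⟩)⟩,
    fun q' _ hr hc => hstat _ (HasMarginals.sub ⟨hr, hc⟩ hq.2), fun i j => ?_⟩
  rw [hfact i j]
  exact mul_mul_iInf_pow_three_le_of_hasMarginals_scaling hp hpsum (fun i => exp_pos (A i))
    (fun j => exp_pos (B j)) hqvsum hscal i j
end
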